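/- arXiv:2603.15961 — 8 statements merged into one kernel-verified Lean document; each statement's English description precedes it below -/
import Mathlib

section
/- Let τ: ℝ → ℝ be continuously differentiable with τ'(t) < 1 for all t, and suppose there exist constants 0 < τ_min ≤ τ_max such that τ_min ≤ τ(t) ≤ τ_max for all t ∈ ℝ. For every τ* > 0 there exists a strictly increasing, continuously differentiable function h: [−τ*, ∞) → ℝ such that h(0) = 0 and h(λ) − τ(h(λ)) = h(λ − τ*) for all λ ≥ 0. -/
/-!
With `F t = t - τ t`, the hypotheses make `F` an increasing C¹ diffeomorphism of `ℝ`, and the Abel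
equation reads `h λ = G (h (λ - τ*))` for `λ ≥ 0`, where `G = F⁻¹`. Hence `h` is determined by its
restriction `φ` to `[-τ*, 0]`: `h λ = G^[n] (φ (λ - n τ*))` with `n = ⌈λ / τ*⌉`. A quadratic `φ`
with `φ 0 = 0`, `φ (-τ*) = F 0` and `φ' (-τ*) = F' 0 * φ' 0` makes `h` continuous and C¹ across `0`,
and the recursion carries this across every `n τ*`. Strict monotonicity propagates the same way,
since `φ` and `G` are increasing.
-/

open Set Filter Function Topology

theorem contDiff_one_ite_le {E : Type*} [NormedAddCommGroup E] [NormedSpace ℝ E]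
    {f g : ℝ → E} {b : ℝ} (hf : ContDiff ℝ 1 f) (hg : ContDiff ℝ 1 g) (hb : f b = g b)
    (hb' : deriv f b = deriv g b) :
    ContDiff ℝ 1 (fun x => if x ≤ b then f x else g x) := by
  set p : ℝ → E := fun x => if x ≤ b then f x else g x
  have hderiv : ∀ x, HasDerivAt p (if x ≤ b then deriv f x else deriv g x) x := by
    intro x
    have hfx := (hf.differentiable one_ne_zero x).hasDerivAt
    have hgx := (hg.differentiable one_ne_zero x).hasDerivAt
    rcases lt_trichotomy x b with hx | rfl | hx
    · rw [if_pos hx.le]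
      refine hfx.congr_of_eventuallyEq ?_
      filter_upwards [Iic_mem_nhds hx] with y hy using if_pos hy
    · rw [if_pos le_rfl, ← hasDerivWithinAt_univ, ← Iic_union_Ici (a := x)]
      have hleft : HasDerivWithinAt p (deriv f x) (Iic x) x :=
        hfx.hasDerivWithinAt.congr (fun y hy => if_pos hy) (if_pos le_rfl)
      refine hleft.union ?_
      rw [hb']
      refine hgx.hasDerivWithinAt.congr (fun y hy => ?_) (by simp [p, hb])
      rcases (mem_Ici.1 hy).eq_or_lt with rfl | hy
      · simp [p, hb]
      · exact if_neg hy.not_ge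
    · rw [if_neg hx.not_ge]
      refine hgx.congr_of_eventuallyEq ?_
      filter_upwards [Ioi_mem_nhds hx] with y hy using if_neg (not_le.2 hy)
  rw [contDiff_one_iff_deriv]
  refine ⟨fun x => (hderiv x).differentiableAt, ?_⟩
  rw [show deriv p = _ from funext fun x => (hderiv x).deriv]
  exact (hf.continuous_deriv le_rfl).if_le (hg.continuous_deriv le_rfl) continuous_id
    continuous_const fun x hx => hx ▸ hb'

theorem exists_contDiff_inverse_of_deriv_pos {n : WithTop ℕ∞} {F F' : ℝ → ℝ}
    (hF : ContDiff ℝ n F) (hF' : ∀ x, HasDerivAt F (F' x) x) (hpos : ∀ x, 0 < F' x)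
    (hsurj : Surjective F) :
    ∃ G : ℝ → ℝ, StrictMono G ∧ ContDiff ℝ n G ∧ LeftInverse G F ∧ RightInverse G F ∧
      ∀ x, HasDerivAt G (F' x)⁻¹ (F x) := by
  have hmono : StrictMono F := strictMono_of_deriv_pos fun x => (hF' x).deriv ▸ hpos x
  let e := hmono.orderIsoOfSurjective F hsurj
  refine ⟨e.symm, e.symm.strictMono,
    e.toHomeomorph.contDiff_symm_deriv (fun x => (hpos x).ne') hF' hF, e.symm_apply_apply,
    e.apply_symm_apply, fun x => ?_⟩
  refine HasDerivAt.of_local_left_inverse e.symm.continuous.continuousAt ?_ (hpos x).ne'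
    (Eventually.of_forall e.apply_symm_apply)
  rw [show e.symm (F x) = x from e.symm_apply_apply x]
  exact hF' x

theorem surjective_sub_of_bounded {τ : ℝ → ℝ} {a b : ℝ} (hτ : Continuous τ)
    (hbound : ∀ t, a ≤ τ t ∧ τ t ≤ b) : Surjective (fun t => t - τ t) := by
  have hF : Continuous (fun t => t - τ t) := continuous_id.sub hτ
  refine hF.surjective ?_ ?_
  · exact tendsto_atTop_mono (fun t => by dsimp only [id]; linarith [(hbound t).2])
      (tendsto_atTop_add_const_right atTop (-b) tendsto_id)
  · exact tendsto_atBot_mono (fun t => by dsimp only [id]; linarith [(hbound t).1])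
      (tendsto_atBot_add_const_right atBot (-a) tendsto_id)

theorem exists_strictMonoOn_Icc_of_endpoint_data {T a k : ℝ} (hT : 0 < T) (ha : 0 < a)
    (hk : 0 < k) :
    ∃ φ : ℝ → ℝ, ContDiff ℝ 1 φ ∧ StrictMonoOn φ (Icc (-T) 0) ∧ φ 0 = 0 ∧ φ (-T) = -a ∧
      deriv φ (-T) = k * deriv φ 0 := by
  set m := a / ((1 + k) * T ^ 2)
  have hm : 0 < m := by positivity
  have hderiv : ∀ x, HasDerivAt (fun x => m * (2 * T * x + (1 - k) * x ^ 2))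
      (m * (2 * (T + x) + 2 * k * -x)) x := by
    intro x
    refine ((((hasDerivAt_id' x).const_mul (2 * T)).add
      ((hasDerivAt_pow 2 x).const_mul (1 - k))).const_mul m).congr_deriv ?_
    push_cast
    ring
  refine ⟨fun x => m * (2 * T * x + (1 - k) * x ^ 2), by fun_prop, ?_, by simp, ?_, ?_⟩
  · refine strictMonoOn_of_deriv_pos (convex_Icc _ _) (by fun_prop) fun x hx => ?_
    rw [interior_Icc] at hx
    rw [(hderiv x).deriv]
    have hkx : 0 < 2 * k * -x := by nlinarith [hx.2]
    nlinarith [hx.1]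
  · simp only [m]
    field_simp
    ring
  · rw [(hderiv _).deriv, (hderiv _).deriv]
    ring

noncomputable def abelExtension (G φ : ℝ → ℝ) (T x : ℝ) : ℝ :=
  G^[⌈x / T⌉₊] (φ (x - ⌈x / T⌉₊ * T))

namespace abelExtension

variable {G φ : ℝ → ℝ} {T x : ℝ}

theorem of_nonpos (hT : 0 ≤ T) (hx : x ≤ 0) : abelExtension G φ T x = φ x := by
  simp [abelExtension, Nat.ceil_eq_zero.2 (div_nonpos_of_nonpos_of_nonneg hx hT)]

theorem of_pos (hT : 0 < T) (hx : 0 < x) :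
    abelExtension G φ T x = G (abelExtension G φ T (x - T)) := by
  obtain ⟨m, hm⟩ := Nat.exists_eq_succ_of_ne_zero (Nat.ceil_pos.2 (div_pos hx hT)).ne'
  have hshift : (x - T) / T = x / T - 1 := by rw [sub_div, div_self hT.ne']
  rw [abelExtension, abelExtension, hshift, Nat.ceil_sub_one, hm, Nat.succ_sub_one,
    iterate_succ_apply']
  congr 3
  push_cast
  ring

theorem of_nonneg (hT : 0 < T) (h0 : G (φ (-T)) = φ 0) (hx : 0 ≤ x) :
    abelExtension G φ T x = G (abelExtension G φ T (x - T)) := by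
  rcases hx.eq_or_lt with rfl | hx
  · rw [zero_sub, of_nonpos hT.le le_rfl, of_nonpos hT.le (by linarith), h0]
  · exact of_pos hT hx

theorem eq_ite_of_lt (hT : 0 < T) (hx : x < T) :
    abelExtension G φ T x = if x ≤ 0 then φ x else G (φ (x - T)) := by
  split_ifs with hx0
  · exact of_nonpos hT.le hx0
  · rw [of_pos hT (not_le.1 hx0), of_nonpos hT.le (by linarith)]

theorem strictMonoOn (hT : 0 < T) (hG : StrictMono G) (hφ : StrictMonoOn φ (Icc (-T) 0))
    (h0 : G (φ (-T)) = φ 0) : StrictMonoOn (abelExtension G φ T) (Ici (-T)) := by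
  have hsteps : ∀ n : ℕ, StrictMonoOn (abelExtension G φ T) (Icc (-T) (n * T)) := by
    intro n
    induction n with
    | zero =>
      simpa using hφ.congr fun x hx => (of_nonpos hT.le hx.2).symm
    | succ n ih =>
      rw [← Icc_union_Icc_eq_Icc (b := 0) (by linarith) (by positivity)]
      refine (hφ.congr fun x hx => (of_nonpos hT.le hx.2).symm).union ?_
        (isGreatest_Icc (by linarith)) (isLeast_Icc (by positivity))
      intro x hx y hy hxy
      dsimp only
      rw [of_nonneg hT h0 hx.1, of_nonneg hT h0 hy.1]
      push_cast at hx hy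
      exact hG (ih ⟨by linarith [hx.1], by linarith [hx.2]⟩ ⟨by linarith [hy.1], by linarith [hy.2]⟩
        (by linarith))
  intro x hx y hy hxy
  obtain ⟨n, hn⟩ := exists_nat_ge (y / T)
  have hyn : y ≤ n * T := (div_le_iff₀ hT).1 hn
  exact hsteps n ⟨hx, hxy.le.trans hyn⟩ ⟨hy, hyn⟩ hxy

theorem contDiff (hT : 0 < T) (hG : ContDiff ℝ 1 G) (hφ : ContDiff ℝ 1 φ)
    (h0 : G (φ (-T)) = φ 0) (h0' : deriv G (φ (-T)) * deriv φ (-T) = deriv φ 0) :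
    ContDiff ℝ 1 (abelExtension G φ T) := by
  have hshift : ContDiff ℝ 1 (fun y => G (φ (y - T))) :=
    hG.comp (hφ.comp (contDiff_id.sub contDiff_const))
  have hshift' : HasDerivAt (fun y => G (φ (y - T))) (deriv G (φ (-T)) * deriv φ (-T)) 0 := by
    have hchain := (hG.differentiable one_ne_zero (φ (0 - T))).hasDerivAt.comp (0 : ℝ)
      ((hφ.differentiable one_ne_zero (0 - T)).hasDerivAt.comp_sub_const 0 T)
    rwa [zero_sub] at hchain
  have hglue := contDiff_one_ite_le (b := 0) hφ hshift (by rwa [zero_sub, eq_comm])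
    (by rw [hshift'.deriv, h0'])
  have hfirst : ∀ x < T, ContDiffAt ℝ 1 (abelExtension G φ T) x := fun x hx =>
    hglue.contDiffAt.congr_of_eventuallyEq <| by
      filter_upwards [Iio_mem_nhds hx] with y hy using eq_ite_of_lt hT hy
  have hsteps : ∀ n : ℕ, ∀ x < (n + 1) * T, ContDiffAt ℝ 1 (abelExtension G φ T) x := by
    intro n
    induction n with
    | zero => simpa using hfirst
    | succ n ih =>
      intro x hx
      rcases lt_or_ge x T with hxT | hxT
      · exact hfirst x hxT
      have hrec : ContDiffAt ℝ 1 (fun y => G (abelExtension G φ T (y - T))) x :=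
        hG.contDiffAt.comp x ((ih (x - T) (by push_cast at hx; linarith)).comp x
          (contDiffAt_id.sub contDiffAt_const))
      refine hrec.congr_of_eventuallyEq ?_
      filter_upwards [Ioi_mem_nhds (hT.trans_le hxT)] with y hy using of_pos hT hy
  refine contDiff_iff_contDiffAt.2 fun x => ?_
  obtain ⟨n, hn⟩ := exists_nat_gt (x / T)
  exact hsteps n x (by rw [div_lt_iff₀ hT] at hn; nlinarith)

end abelExtension

theorem exists_time_transformation_general
    (τ : ℝ → ℝ) (hτC1 : ContDiff ℝ 1 τ)
    (hτ' : ∀ t : ℝ, deriv τ t < 1)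
    (τmin τmax : ℝ) (hτmin : 0 < τmin)
    (hbound : ∀ t : ℝ, τmin ≤ τ t ∧ τ t ≤ τmax)
    (τs : ℝ) (hτs : 0 < τs) :
    ∃ h : ℝ → ℝ,
      StrictMonoOn h (Set.Ici (-τs)) ∧
      ContDiffOn ℝ 1 h (Set.Ici (-τs)) ∧
      h 0 = 0 ∧
      ∀ l : ℝ, 0 ≤ l → h l - τ (h l) = h (l - τs) := by
  have hslope : ∀ t, 0 < 1 - deriv τ t := fun t => sub_pos.2 (hτ' t)
  have hF' : ∀ t, HasDerivAt (fun t => t - τ t) (1 - deriv τ t) t := fun t =>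
    (hasDerivAt_id' t).sub (hτC1.differentiable one_ne_zero t).hasDerivAt
  obtain ⟨G, hGmono, hGC1, hGF, hFG, hG'⟩ :=
    exists_contDiff_inverse_of_deriv_pos (F := fun t => t - τ t) (contDiff_id.sub hτC1) hF'
      hslope (surjective_sub_of_bounded hτC1.continuous hbound)
  obtain ⟨φ, hφC1, hφmono, hφ0, hφT, hφ'⟩ :=
    exists_strictMonoOn_Icc_of_endpoint_data hτs (hτmin.trans_le (hbound 0).1) (hslope 0)
  have hφT_eq : φ (-τs) = 0 - τ 0 := by rw [hφT, zero_sub]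
  have h0 : G (φ (-τs)) = φ 0 := by rw [hφT_eq, hGF 0, hφ0]
  have h0' : deriv G (φ (-τs)) * deriv φ (-τs) = deriv φ 0 := by
    rw [hφT_eq, (hG' 0).deriv, hφ', ← mul_assoc, inv_mul_cancel₀ (hslope 0).ne', one_mul]
  refine ⟨abelExtension G φ τs, abelExtension.strictMonoOn hτs hGmono hφmono h0,
    (abelExtension.contDiff hτs hGC1 hφC1 h0 h0').contDiffOn,
    by rw [abelExtension.of_nonpos hτs.le le_rfl, hφ0], fun l hl => ?_⟩
  rw [abelExtension.of_nonneg hτs h0 hl]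
  exact hFG _

/-- For a continuously differentiable delay τ with τ'(t) < 1 and
0 < τ_min ≤ τ(t) ≤ τ_max, and for each τ* > 0, there exists a strictly
increasing, continuously differentiable time-transformation h on [−τ*, ∞)
with h(0) = 0 satisfying the Abel equation h(λ) − τ(h(λ)) = h(λ − τ*)
for all λ ≥ 0. -/
theorem exists_time_transformation
    (τ : ℝ → ℝ) (hτC1 : ContDiff ℝ 1 τ)
    (hτ' : ∀ t : ℝ, deriv τ t < 1)
    (τmin τmax : ℝ) (hτmin : 0 < τmin) (hτminmax : τmin ≤ τmax)
    (hbound : ∀ t : ℝ, τmin ≤ τ t ∧ τ t ≤ τmax)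
    (τs : ℝ) (hτs : 0 < τs) :
    ∃ h : ℝ → ℝ,
      StrictMonoOn h (Set.Ici (-τs)) ∧
      ContDiffOn ℝ 1 h (Set.Ici (-τs)) ∧
      h 0 = 0 ∧
      ∀ l : ℝ, 0 ≤ l → h l - τ (h l) = h (l - τs) :=
  exists_time_transformation_general τ hτC1 hτ' τmin τmax hτmin hbound τs hτs
end

section
/- Let A₀, A₁ be real n×n matrices, let τ: ℝ → ℝ, let τ* > 0, and let h: ℝ → ℝ be differentiable, strictly increasing, with h(0) = 0 and satisfying h(λ) − τ(h(λ)) = h(λ − τ*) for all λ ≥ 0. If x: ℝ → ℝⁿ is differentiable and satisfies x'(t) = A₀ x(t) + A₁ x(t − τ(t)) for all t ≥ 0, then the function x̄ := x ∘ h is differentiable on [0, ∞) and satisfies x̄'(λ) = h'(λ) (A₀ x̄(λ) + A₁ x̄(λ − τ*)) for all λ ≥ 0. -/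
theorem time_transformed_DDE_forward_general
    (n : ℕ) (A₀ A₁ : Matrix (Fin n) (Fin n) ℝ) (τ : ℝ → ℝ)
    (τs : ℝ)
    (h : ℝ → ℝ) (hhdiff : Differentiable ℝ h) (hhmono : StrictMono h)
    (hh0 : h 0 = 0)
    (habel : ∀ l : ℝ, 0 ≤ l → h l - τ (h l) = h (l - τs))
    (x : ℝ → Fin n → ℝ) (hxdiff : Differentiable ℝ x)
    (hdde : ∀ t : ℝ, 0 ≤ t → deriv x t = A₀.mulVec (x t) + A₁.mulVec (x (t - τ t))) :
    ∀ l : ℝ, 0 ≤ l →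
      HasDerivAt (fun μ : ℝ => x (h μ))
        (deriv h l • (A₀.mulVec (x (h l)) + A₁.mulVec (x (h (l - τs))))) l := by
  intro l hl
  have hhl : 0 ≤ h l := hh0 ▸ hhmono.monotone hl
  have hchain : HasDerivAt (fun μ : ℝ => x (h μ)) (deriv h l • deriv x (h l)) l :=
    (hxdiff (h l)).hasDerivAt.scomp l (hhdiff l).hasDerivAt
  have hdde_at : deriv x (h l) = A₀.mulVec (x (h l)) + A₁.mulVec (x (h (l - τs))) := by
    rw [hdde (h l) hhl, habel l hl]
  rwa [hdde_at] at hchain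

/-- If h is a differentiable, strictly increasing time-transformation
with h(0) = 0 satisfying the Abel equation h(λ) − τ(h(λ)) = h(λ − τ*) for λ ≥ 0,
and x solves the DDE x'(t) = A₀x(t) + A₁x(t − τ(t)) for t ≥ 0, then x̄ = x ∘ h is
differentiable on [0, ∞) with x̄'(λ) = h'(λ)(A₀x̄(λ) + A₁x̄(λ − τ*)) for λ ≥ 0. -/
theorem time_transformed_DDE_forward
    (n : ℕ) (A₀ A₁ : Matrix (Fin n) (Fin n) ℝ) (τ : ℝ → ℝ)
    (τs : ℝ) (hτs : 0 < τs)
    (h : ℝ → ℝ) (hhdiff : Differentiable ℝ h) (hhmono : StrictMono h)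
    (hh0 : h 0 = 0)
    (habel : ∀ l : ℝ, 0 ≤ l → h l - τ (h l) = h (l - τs))
    (x : ℝ → Fin n → ℝ) (hxdiff : Differentiable ℝ x)
    (hdde : ∀ t : ℝ, 0 ≤ t → deriv x t = A₀.mulVec (x t) + A₁.mulVec (x (t - τ t))) :
    ∀ l : ℝ, 0 ≤ l →
      HasDerivAt (fun μ : ℝ => x (h μ))
        (deriv h l • (A₀.mulVec (x (h l)) + A₁.mulVec (x (h (l - τs))))) l :=
  time_transformed_DDE_forward_general n A₀ A₁ τ τs h hhdiff hhmono hh0 habel x hxdiff hdde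
end

section
/- Let A₀, A₁ be real n×n matrices, let τ: ℝ → ℝ, let τ* > 0, and let h: ℝ → ℝ be a differentiable bijection with h'(λ) > 0 for all λ, h(0) = 0, and h(λ) − τ(h(λ)) = h(λ − τ*) for all λ ≥ 0. If x̄: ℝ → ℝⁿ is differentiable and satisfies x̄'(λ) = h'(λ) (A₀ x̄(λ) + A₁ x̄(λ − τ*)) for all λ ≥ 0, then the function x := x̄ ∘ h⁻¹ is differentiable on [0, ∞) and satisfies x'(t) = A₀ x(t) + A₁ x(t − τ(t)) for all t ≥ 0. -/
/-! Since `h` is a strictly increasing differentiable bijection with nonvanishing derivative, its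
inverse `g` is differentiable with `g'(t) = 1 / h'(g t)`, so the chain rule cancels the factor
`h'` of the transformed equation. The Abel equation at `λ = g t` says exactly that the delayed time
`t - τ t` is mapped by `g` to `g t - τ*`, and `h 0 = 0` ensures `g t ≥ 0` when `t ≥ 0`. -/

open Function

theorem StrictMono.continuous_invFun {α β : Type*} [LinearOrder α] [TopologicalSpace α]
    [OrderTopology α] [LinearOrder β] [TopologicalSpace β] [OrderTopology β] [Nonempty α]
    {h : α → β} (hmono : StrictMono h) (hsurj : Surjective h) : Continuous (invFun h) := by
  let e := hmono.orderIsoOfSurjective h hsurj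
  have he : invFun h = e.symm :=
    invFun_eq_of_injective_of_rightInverse hmono.injective e.apply_symm_apply
  rw [he]
  exact e.symm.continuous

theorem StrictMono.hasDerivAt_invFun {h : ℝ → ℝ} {h' t : ℝ} (hmono : StrictMono h)
    (hsurj : Surjective h) (hderiv : HasDerivAt h h' (invFun h t)) (hh' : h' ≠ 0) :
    HasDerivAt (invFun h) h'⁻¹ t :=
  hderiv.of_local_left_inverse (hmono.continuous_invFun hsurj).continuousAt hh'
    (.of_forall (rightInverse_invFun hsurj))

theorem StrictMono.hasDerivAt_comp_invFun {E : Type*} [NormedAddCommGroup E] [NormedSpace ℝ E]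
    {h : ℝ → ℝ} {x : ℝ → E} {h' t : ℝ} {v : E} (hmono : StrictMono h) (hsurj : Surjective h)
    (hderiv : HasDerivAt h h' (invFun h t)) (hh' : h' ≠ 0)
    (hx : HasDerivAt x (h' • v) (invFun h t)) :
    HasDerivAt (fun s => x (invFun h s)) v t := by
  have hcomp := hx.scomp t (hmono.hasDerivAt_invFun hsurj hderiv hh')
  rwa [smul_smul, inv_mul_cancel₀ hh', one_smul] at hcomp

theorem time_transformed_DDE_backward_general
    (n : ℕ) (A₀ A₁ : Matrix (Fin n) (Fin n) ℝ) (τ : ℝ → ℝ)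
    (τs : ℝ)
    (h : ℝ → ℝ) (hhbij : Function.Bijective h) (hhdiff : Differentiable ℝ h)
    (hh' : ∀ l : ℝ, 0 < deriv h l) (hh0 : h 0 = 0)
    (habel : ∀ l : ℝ, 0 ≤ l → h l - τ (h l) = h (l - τs))
    (xb : ℝ → Fin n → ℝ) (hxbdiff : Differentiable ℝ xb)
    (hdde : ∀ l : ℝ, 0 ≤ l →
      deriv xb l = deriv h l • (A₀.mulVec (xb l) + A₁.mulVec (xb (l - τs)))) :
    ∀ t : ℝ, 0 ≤ t →
      HasDerivAt (fun s : ℝ => xb (Function.invFun h s))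
        (A₀.mulVec (xb (Function.invFun h t)) +
          A₁.mulVec (xb (Function.invFun h (t - τ t)))) t := by
  intro t ht
  have hmono : StrictMono h := strictMono_of_deriv_pos hh'
  set l := invFun h t
  have hhl : h l = t := rightInverse_invFun hhbij.2 t
  have hl0 : 0 ≤ l := hmono.le_iff_le.1 (by rwa [hhl, hh0])
  have hdelay : invFun h (t - τ t) = l - τs := by
    rw [← hhl, habel l hl0, leftInverse_invFun hhbij.1]
  rw [hdelay]
  refine hmono.hasDerivAt_comp_invFun hhbij.2 (hhdiff l).hasDerivAt (hh' l).ne' ?_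
  rw [← hdde l hl0]
  exact (hxbdiff l).hasDerivAt

/-- If h is a differentiable bijection with h' > 0, h(0) = 0,
satisfying the Abel equation, and x̄ solves the transformed DDE
x̄'(λ) = h'(λ)(A₀x̄(λ) + A₁x̄(λ − τ*)) for λ ≥ 0, then x = x̄ ∘ h⁻¹ is
differentiable on [0, ∞) and solves the original DDE
x'(t) = A₀x(t) + A₁x(t − τ(t)) for t ≥ 0. -/
theorem time_transformed_DDE_backward
    (n : ℕ) (A₀ A₁ : Matrix (Fin n) (Fin n) ℝ) (τ : ℝ → ℝ)
    (τs : ℝ) (hτs : 0 < τs)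
    (h : ℝ → ℝ) (hhbij : Function.Bijective h) (hhdiff : Differentiable ℝ h)
    (hh' : ∀ l : ℝ, 0 < deriv h l) (hh0 : h 0 = 0)
    (habel : ∀ l : ℝ, 0 ≤ l → h l - τ (h l) = h (l - τs))
    (xb : ℝ → Fin n → ℝ) (hxbdiff : Differentiable ℝ xb)
    (hdde : ∀ l : ℝ, 0 ≤ l →
      deriv xb l = deriv h l • (A₀.mulVec (xb l) + A₁.mulVec (xb (l - τs)))) :
    ∀ t : ℝ, 0 ≤ t →
      HasDerivAt (fun s : ℝ => xb (Function.invFun h s))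
        (A₀.mulVec (xb (Function.invFun h t)) +
          A₁.mulVec (xb (Function.invFun h (t - τ t)))) t :=
  time_transformed_DDE_backward_general n A₀ A₁ τ τs h hhbij hhdiff hh' hh0 habel xb hxbdiff hdde
end

section
/- Let τ: ℝ → ℝ be continuous and suppose g(t) := t − τ(t) is a strictly increasing continuous bijection of ℝ with inverse g⁻¹. Let τ* > 0 and let φ: [−τ*, 0] → ℝ be continuous and strictly increasing with φ(0) = 0 and φ(−τ*) = −τ(0). Define h: [−τ*, ∞) → ℝ by h(λ) := (g⁻¹)^k(φ(λ − k τ*)) for λ ∈ [(k−1)τ*, kτ*) and each integer k ≥ 0. Then h is continuous and strictly increasing on [−τ*, ∞). -/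
/-!
On each closed piece `[(k-1)τ*, kτ*]`, `h` coincides with `(g⁻¹)^[k] ∘ φ ∘ (· - kτ*)`: on the
half-open piece this is the definition, and at the right endpoint the two adjacent formulas agree
because `g⁻¹ (φ (-τ*)) = g⁻¹ (g 0) = 0 = φ 0`. Each such function is continuous and strictly
increasing, since `g⁻¹` is an order automorphism of `ℝ`, and closed pieces sharing their endpoints
glue to the same properties on `[-τ*, ∞)`.
-/

open Set

section Grid

variable {β : Type*} {a T : ℝ}

lemma exists_nat_lt_add_mul (hT : 0 < T) (x : ℝ) : ∃ n : ℕ, x < a + n * T := by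
  obtain ⟨n, hn⟩ := exists_nat_gt ((x - a) / T)
  exact ⟨n, by rw [div_lt_iff₀ hT] at hn; linarith⟩

lemma continuousOn_Icc_of_grid [TopologicalSpace β] {f : ℝ → β} (hT : 0 ≤ T)
    (hf : ∀ k : ℕ, ContinuousOn f (Icc (a + k * T) (a + (k + 1) * T))) (n : ℕ) :
    ContinuousOn f (Icc a (a + n * T)) := by
  induction n with
  | zero => simp
  | succ n ih =>
    have hle : a ≤ a + n * T := by nlinarith
    rw [← Icc_union_Icc_eq_Icc hle (by push_cast; linarith)]
    exact ih.union_of_isClosed (by push_cast; exact hf n) isClosed_Icc isClosed_Icc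

lemma strictMonoOn_Icc_of_grid [Preorder β] {f : ℝ → β} (hT : 0 ≤ T)
    (hf : ∀ k : ℕ, StrictMonoOn f (Icc (a + k * T) (a + (k + 1) * T))) (n : ℕ) :
    StrictMonoOn f (Icc a (a + n * T)) := by
  induction n with
  | zero => simp
  | succ n ih =>
    have hle : a ≤ a + n * T := by nlinarith
    have hle' : a + n * T ≤ a + ((n + 1 : ℕ) : ℝ) * T := by push_cast; linarith
    rw [← Icc_union_Icc_eq_Icc hle hle']
    exact ih.union (by push_cast; exact hf n) (isGreatest_Icc hle) (isLeast_Icc hle')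

lemma continuousOn_Ici_of_grid [TopologicalSpace β] {f : ℝ → β} (hT : 0 < T)
    (hf : ∀ k : ℕ, ContinuousOn f (Icc (a + k * T) (a + (k + 1) * T))) :
    ContinuousOn f (Ici a) := by
  intro x hx
  obtain ⟨n, hn⟩ := exists_nat_lt_add_mul (a := a) hT x
  refine (continuousOn_Icc_of_grid hT.le hf n x ⟨hx, hn.le⟩).mono_of_mem_nhdsWithin ?_
  rw [← Ici_inter_Iic]
  exact inter_mem_nhdsWithin _ (Iic_mem_nhds hn)

lemma strictMonoOn_Ici_of_grid [Preorder β] {f : ℝ → β} (hT : 0 < T)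
    (hf : ∀ k : ℕ, StrictMonoOn f (Icc (a + k * T) (a + (k + 1) * T))) :
    StrictMonoOn f (Ici a) := by
  intro x hx y hy hxy
  obtain ⟨n, hn⟩ := exists_nat_lt_add_mul (a := a) hT y
  exact strictMonoOn_Icc_of_grid hT.le hf n ⟨hx, by linarith⟩ ⟨hy, hn.le⟩ hxy

end Grid

section Propagation

variable {ginv φ h : ℝ → ℝ} {τs : ℝ}

lemma mapsTo_sub_Icc_neg (k : ℕ) :
    MapsTo (fun l => l - k * τs) (Icc ((k - 1) * τs) (k * τs)) (Icc (-τs) 0) :=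
  fun _ hl => ⟨by linarith [hl.1], by linarith [hl.2]⟩

lemma eqOn_iterate_of_propagation (hτs : 0 < τs)
    (hdef : ∀ k : ℕ, ∀ l : ℝ, ((k : ℝ) - 1) * τs ≤ l → l < (k : ℝ) * τs →
      h l = ginv^[k] (φ (l - (k : ℝ) * τs)))
    (hmatch : ginv (φ (-τs)) = φ 0) (k : ℕ) :
    EqOn h (fun l => ginv^[k] (φ (l - k * τs))) (Icc ((k - 1) * τs) (k * τs)) := by
  rintro l ⟨hl₁, hl₂⟩
  rcases hl₂.lt_or_eq with hlt | rfl
  · exact hdef k l hl₁ hlt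
  · have hnext := hdef (k + 1) (k * τs) (by push_cast; linarith) (by push_cast; linarith)
    have hshift : (k : ℝ) * τs - ((k + 1 : ℕ) : ℝ) * τs = -τs := by push_cast; ring
    rw [hnext, hshift, Function.iterate_succ_apply, hmatch]
    simp only [sub_self]

lemma continuousOn_iterate_comp_sub (hginv : Continuous ginv)
    (hφ : ContinuousOn φ (Icc (-τs) 0)) (k : ℕ) :
    ContinuousOn (fun l => ginv^[k] (φ (l - k * τs))) (Icc ((k - 1) * τs) (k * τs)) :=
  (hginv.iterate k).comp_continuousOn (hφ.comp (by fun_prop) (mapsTo_sub_Icc_neg k))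

lemma strictMonoOn_iterate_comp_sub (hginv : StrictMono ginv)
    (hφ : StrictMonoOn φ (Icc (-τs) 0)) (k : ℕ) :
    StrictMonoOn (fun l => ginv^[k] (φ (l - k * τs))) (Icc ((k - 1) * τs) (k * τs)) :=
  fun _ hx _ hy hxy => hginv.iterate k
    (hφ (mapsTo_sub_Icc_neg k hx) (mapsTo_sub_Icc_neg k hy) (by linarith))

end Propagation

theorem propagated_seed_continuous_strictMono_general
    (τ : ℝ → ℝ)
    (g ginv : ℝ → ℝ) (hg : ∀ t : ℝ, g t = t - τ t)
    (hgmono : StrictMono g)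
    (hli : Function.LeftInverse ginv g) (hri : Function.RightInverse ginv g)
    (τs : ℝ) (hτs : 0 < τs) (φ : ℝ → ℝ)
    (hφc : ContinuousOn φ (Set.Icc (-τs) 0))
    (hφmono : StrictMonoOn φ (Set.Icc (-τs) 0))
    (hφ0 : φ 0 = 0) (hφτ : φ (-τs) = -τ 0)
    (h : ℝ → ℝ)
    (hdef : ∀ k : ℕ, ∀ l : ℝ, ((k : ℝ) - 1) * τs ≤ l → l < (k : ℝ) * τs →
      h l = ginv^[k] (φ (l - (k : ℝ) * τs))) :
    ContinuousOn h (Set.Ici (-τs)) ∧ StrictMonoOn h (Set.Ici (-τs)) := by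
  let gIso : ℝ ≃o ℝ := hgmono.orderIsoOfRightInverse g ginv hri
  have hmatch : ginv (φ (-τs)) = φ 0 := by
    have h0 := hli 0
    rwa [hg, zero_sub, ← hφτ, ← hφ0] at h0
  have hpiece (k : ℕ) :
      Icc (-τs + k * τs) (-τs + (k + 1) * τs) = Icc ((k - 1) * τs) (k * τs) := by
    congr 1 <;> ring
  have hEq := eqOn_iterate_of_propagation hτs hdef hmatch
  refine ⟨continuousOn_Ici_of_grid hτs fun k => ?_, strictMonoOn_Ici_of_grid hτs fun k => ?_⟩
  · rw [hpiece]
    exact (continuousOn_iterate_comp_sub gIso.symm.continuous hφc k).congr (hEq k)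
  · rw [hpiece]
    exact (strictMonoOn_iterate_comp_sub gIso.symm.strictMono hφmono k).congr (hEq k).symm

/-- If τ is continuous, g(t) = t − τ(t) is a strictly increasing
continuous bijection of ℝ with inverse g⁻¹, and φ : [−τ*, 0] → ℝ is continuous
and strictly increasing with φ(0) = 0 and φ(−τ*) = −τ(0), then the propagated
function h(λ) = (g⁻¹)^k(φ(λ − kτ*)) for λ ∈ [(k−1)τ*, kτ*) is continuous and
strictly increasing on [−τ*, ∞). -/
theorem propagated_seed_continuous_strictMono
    (τ : ℝ → ℝ) (hτc : Continuous τ)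
    (g ginv : ℝ → ℝ) (hg : ∀ t : ℝ, g t = t - τ t)
    (hgmono : StrictMono g) (hgcont : Continuous g) (hgbij : Function.Bijective g)
    (hli : Function.LeftInverse ginv g) (hri : Function.RightInverse ginv g)
    (τs : ℝ) (hτs : 0 < τs) (φ : ℝ → ℝ)
    (hφc : ContinuousOn φ (Set.Icc (-τs) 0))
    (hφmono : StrictMonoOn φ (Set.Icc (-τs) 0))
    (hφ0 : φ 0 = 0) (hφτ : φ (-τs) = -τ 0)
    (h : ℝ → ℝ)
    (hdef : ∀ k : ℕ, ∀ l : ℝ, ((k : ℝ) - 1) * τs ≤ l → l < (k : ℝ) * τs →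
      h l = ginv^[k] (φ (l - (k : ℝ) * τs))) :
    ContinuousOn h (Set.Ici (-τs)) ∧ StrictMonoOn h (Set.Ici (-τs)) :=
  propagated_seed_continuous_strictMono_general τ g ginv hg hgmono hli hri τs hτs φ hφc hφmono hφ0
    hφτ h hdef
end

section
/- Let ω, τ₀, τ* > 0 and suppose k ω τ₀ ∉ 2πℤ for every nonzero integer k. Let a: ℤ → ℂ be a summable family with a₀ = 0, define b_k := a_k / (1 − exp(−i k ω τ₀)) for k ≠ 0 and b₀ := −∑_{k≠0} b_k, and assume the family (b_k)_{k∈ℤ} is summable. Define τ̃(t) := ∑_{k∈ℤ} a_k exp(i k ω t) and h₁(λ) := ∑_{k∈ℤ} b_k exp(i k ω (τ₀/τ*) λ). Then h₁(0) = 0 and h₁(λ) − τ̃((τ₀/τ*) λ) = h₁(λ − τ*) for every λ ∈ ℝ. -/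
/-!
Write `h₁` as the trigonometric series `∑ b_k e^{ikνλ}` with `ν = ωτ₀/τ*`. Since `ντ* = ωτ₀`, the
shift `λ ↦ λ - τ*` multiplies the `k`-th term by `e^{-ikωτ₀}`, so `h₁(λ) - h₁(λ - τ*)` is the series
with coefficients `b_k (1 - e^{-ikωτ₀})`, which are `a_k` by the choice of `b_k` (non-resonance makes
the denominators nonzero; for `k = 0` both sides vanish). At `λ = 0` the series is `∑ b_k = 0` by the
choice of `b₀`.
-/

open Complex

theorem Summable.tsum_eq_add_tsum_subtype_ne {ι α : Type*} [AddCommGroup α] [TopologicalSpace α]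
    [IsTopologicalAddGroup α] [T2Space α] {f : ι → α} (hf : Summable f) (i : ι) :
    ∑' k, f k = f i + ∑' k : {k // k ≠ i}, f k := by
  classical
  rw [hf.tsum_eq_add_tsum_ite i]
  congr 1
  refine (tsum_congr fun k => ?_).trans (tsum_subtype {k | k ≠ i} f).symm
  by_cases hk : k = i <;> simp [hk]

theorem Summable.mul_cexp_of_re_eq_zero {ι : Type*} {b : ι → ℂ} (hb : Summable b) {z : ι → ℂ}
    (hz : ∀ k, (z k).re = 0) : Summable fun k => b k * exp (z k) :=
  hb.norm.of_norm_bounded fun k => by simp [norm_exp, hz]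

theorem one_sub_exp_neg_I_mul_ne_zero {x : ℝ} (hx : ¬ ∃ m : ℤ, x = 2 * Real.pi * m) :
    1 - exp (-(I * x)) ≠ 0 := by
  rw [sub_ne_zero, ne_comm, Ne, exp_eq_one_iff]
  rintro ⟨n, hn⟩
  refine hx ⟨-n, ?_⟩
  have hsum : ((x + 2 * Real.pi * n : ℝ) : ℂ) = 0 := by
    refine (mul_eq_zero.1 ?_).resolve_right I_ne_zero
    push_cast
    linear_combination -hn
  push_cast
  linarith [ofReal_eq_zero.1 hsum]

noncomputable def trigSeries (c : ℤ → ℂ) (ν t : ℝ) : ℂ :=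
  ∑' k : ℤ, c k * exp (I * k * ν * t)

namespace trigSeries

variable {c : ℤ → ℂ}

theorem apply_zero (ν : ℝ) : trigSeries c ν 0 = ∑' k, c k := by
  simp [trigSeries]

theorem summable_terms (hc : Summable c) (ν t : ℝ) :
    Summable fun k : ℤ => c k * exp (I * k * ν * t) :=
  hc.mul_cexp_of_re_eq_zero fun k => by simp

theorem sub_apply_sub (hc : Summable c) (ν s t : ℝ) :
    trigSeries c ν t - trigSeries c ν (t - s) =
      trigSeries (fun k => c k * (1 - exp (-(I * k * (ν * s : ℝ))))) ν t := by
  rw [trigSeries, trigSeries, ← (summable_terms hc ν t).tsum_sub (summable_terms hc ν (t - s))]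
  refine tsum_congr fun k => ?_
  have hshift :
      exp (I * k * ν * ↑(t - s)) = exp (I * k * ν * t) * exp (-(I * k * (ν * s : ℝ))) := by
    rw [← exp_add]
    push_cast
    ring_nf
  rw [hshift]
  ring

end trigSeries

theorem mul_one_sub_exp_eq_of_nonresonant {ω τ₀ : ℝ}
    (hres : ∀ k : ℤ, k ≠ 0 → ¬ ∃ m : ℤ, (k : ℝ) * ω * τ₀ = 2 * Real.pi * (m : ℝ))
    {a b : ℤ → ℂ} (ha0 : a 0 = 0)
    (hbk : ∀ k : ℤ, k ≠ 0 →
      b k = a k / (1 - Complex.exp (-(Complex.I * (k : ℂ) * (ω : ℂ) * (τ₀ : ℂ))))) (k : ℤ) :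
    b k * (1 - exp (-(I * k * (ω * τ₀ : ℝ)))) = a k := by
  rcases eq_or_ne k 0 with rfl | hk
  · simp [ha0]
  have hden : 1 - exp (-(I * k * ω * τ₀)) ≠ 0 := by
    simpa [mul_assoc] using one_sub_exp_neg_I_mul_ne_zero (hres k hk)
  rw [hbk k hk, ofReal_mul, ← mul_assoc, div_mul_cancel₀ _ hden]

theorem first_order_expansion_functional_equation_general
    (ω τ₀ τs : ℝ) (hτs : 0 < τs)
    (hres : ∀ k : ℤ, k ≠ 0 → ¬ ∃ m : ℤ, (k : ℝ) * ω * τ₀ = 2 * Real.pi * (m : ℝ))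
    (a : ℤ → ℂ) (ha0 : a 0 = 0)
    (b : ℤ → ℂ)
    (hbk : ∀ k : ℤ, k ≠ 0 →
      b k = a k / (1 - Complex.exp (-(Complex.I * (k : ℂ) * (ω : ℂ) * (τ₀ : ℂ)))))
    (hb0 : b 0 = -∑' k : {k : ℤ // k ≠ 0}, b (k : ℤ))
    (hb : Summable b)
    (τt : ℝ → ℂ)
    (hτt : ∀ t : ℝ, τt t = ∑' k : ℤ, a k * Complex.exp (Complex.I * (k : ℂ) * (ω : ℂ) * (t : ℂ)))
    (h₁ : ℝ → ℂ)
    (hh₁ : ∀ l : ℝ, h₁ l =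
      ∑' k : ℤ, b k * Complex.exp (Complex.I * (k : ℂ) * (ω : ℂ) * ((τ₀ / τs : ℝ) : ℂ) * (l : ℂ))) :
    h₁ 0 = 0 ∧ ∀ l : ℝ, h₁ l - τt (τ₀ / τs * l) = h₁ (l - τs) := by
  set ν := ω * (τ₀ / τs) with hν
  have hh₁ν : ∀ l, h₁ l = trigSeries b ν l := fun l => by
    rw [hh₁, trigSeries]
    exact tsum_congr fun k => by rw [hν]; push_cast; ring_nf
  have hτtν : ∀ l, τt (τ₀ / τs * l) = trigSeries a ν l := fun l => by
    rw [hτt, trigSeries]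
    exact tsum_congr fun k => by rw [hν]; push_cast; ring_nf
  have hντs : ν * τs = ω * τ₀ := by rw [hν]; field_simp
  have hcoeff : (fun k => b k * (1 - exp (-(I * k * (ω * τ₀ : ℝ))))) = a :=
    funext (mul_one_sub_exp_eq_of_nonresonant hres ha0 hbk)
  refine ⟨?_, fun l => ?_⟩
  · rw [hh₁ν, trigSeries.apply_zero, hb.tsum_eq_add_tsum_subtype_ne 0, hb0, neg_add_cancel]
  · rw [hh₁ν, hh₁ν, hτtν, ← hcoeff, ← hντs, ← trigSeries.sub_apply_sub hb]
    ring

/-- First-order perturbative expansion. With b_k = a_k/(1 − e^{−ikωτ₀})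
for k ≠ 0 and b₀ = −∑_{k≠0} b_k, the function h₁(λ) = ∑_k b_k e^{ikω(τ₀/τ*)λ}
satisfies h₁(0) = 0 and the first-order functional equation
h₁(λ) − τ̃((τ₀/τ*)λ) = h₁(λ − τ*), where τ̃(t) = ∑_k a_k e^{ikωt}. -/
theorem first_order_expansion_functional_equation
    (ω τ₀ τs : ℝ) (hω : 0 < ω) (hτ₀ : 0 < τ₀) (hτs : 0 < τs)
    (hres : ∀ k : ℤ, k ≠ 0 → ¬ ∃ m : ℤ, (k : ℝ) * ω * τ₀ = 2 * Real.pi * (m : ℝ))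
    (a : ℤ → ℂ) (ha : Summable a) (ha0 : a 0 = 0)
    (b : ℤ → ℂ)
    (hbk : ∀ k : ℤ, k ≠ 0 →
      b k = a k / (1 - Complex.exp (-(Complex.I * (k : ℂ) * (ω : ℂ) * (τ₀ : ℂ)))))
    (hb0 : b 0 = -∑' k : {k : ℤ // k ≠ 0}, b (k : ℤ))
    (hb : Summable b)
    (τt : ℝ → ℂ)
    (hτt : ∀ t : ℝ, τt t = ∑' k : ℤ, a k * Complex.exp (Complex.I * (k : ℂ) * (ω : ℂ) * (t : ℂ)))
    (h₁ : ℝ → ℂ)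
    (hh₁ : ∀ l : ℝ, h₁ l =
      ∑' k : ℤ, b k * Complex.exp (Complex.I * (k : ℂ) * (ω : ℂ) * ((τ₀ / τs : ℝ) : ℂ) * (l : ℂ))) :
    h₁ 0 = 0 ∧ ∀ l : ℝ, h₁ l - τt (τ₀ / τs * l) = h₁ (l - τs) :=
  first_order_expansion_functional_equation_general ω τ₀ τs hτs hres a ha0 b hbk hb0 hb τt hτt h₁
    hh₁
end

section
/- Let ω, τ₀ ∈ ℝ with sin(ωτ₀/2) ≠ 0, and define h₁: ℝ → ℝ by h₁(λ) := (cos(ωτ₀/2) − cos(ωλ + ωτ₀/2)) / (2 sin(ωτ₀/2)). Then h₁(0) = 0 and h₁(λ) − h₁(λ − τ₀) = sin(ωλ) for every λ ∈ ℝ. -/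
open Real

theorem Real.cos_sub_sub_cos_add (x y : ℝ) : cos (x - y) - cos (x + y) = 2 * sin x * sin y := by
  rw [cos_sub, cos_add]
  ring

theorem Real.cos_sub_sub_cos_add_div (x : ℝ) {y : ℝ} (hy : sin y ≠ 0) :
    (cos (x - y) - cos (x + y)) / (2 * sin y) = sin x := by
  rw [cos_sub_sub_cos_add]
  field_simp

/-- The closed-form first-order correction
h₁(λ) = (cos(ωτ₀/2) − cos(ωλ + ωτ₀/2))/(2 sin(ωτ₀/2)) satisfies h₁(0) = 0 and
the first-order functional equation h₁(λ) − h₁(λ − τ₀) = sin(ωλ) for all λ. -/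
theorem sinusoidal_first_order_functional_equation
    (ω τ₀ : ℝ) (hs : Real.sin (ω * τ₀ / 2) ≠ 0)
    (h₁ : ℝ → ℝ)
    (hh₁ : ∀ l : ℝ, h₁ l =
      (Real.cos (ω * τ₀ / 2) - Real.cos (ω * l + ω * τ₀ / 2)) / (2 * Real.sin (ω * τ₀ / 2))) :
    h₁ 0 = 0 ∧ ∀ l : ℝ, h₁ l - h₁ (l - τ₀) = Real.sin (ω * l) := by
  refine ⟨by simp [hh₁], fun l => ?_⟩
  have hshift : ω * (l - τ₀) + ω * τ₀ / 2 = ω * l - ω * τ₀ / 2 := by ring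
  rw [hh₁, hh₁, hshift, ← sub_div, sub_sub_sub_cancel_left]
  exact cos_sub_sub_cos_add_div (ω * l) hs
end

section
/- Let ω, τ₀ > 0 with sin(ωτ₀/2) ≠ 0, let ε ≥ 0, let τ(t) := τ₀ + ε sin(ωt), let h₁(λ) := (cos(ωτ₀/2) − cos(ωλ + ωτ₀/2)) / (2 sin(ωτ₀/2)), and let h_ε(λ) := λ + ε h₁(λ). Then h_ε(0) = 0 and for every λ ∈ ℝ the residual of the Abel equation satisfies |h_ε(λ) − τ(h_ε(λ)) − h_ε(λ − τ₀)| ≤ ε² ω / |sin(ωτ₀/2)|. -/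
/-!
Write `c = ωτ₀/2`. The correction `h₁` is chosen so that `h₁ λ - h₁ (λ - τ₀) = sin (ωλ)`
(the sum-to-product formula `cos (x - c) - cos (x + c) = 2 sin x sin c`); this cancels the
delay exactly at first order, so the residual is `ε (sin (ωλ) - sin (ω h_ε λ))`. Since `sin (ω ·)`
is `ω`-Lipschitz and `|h_ε λ - λ| = |ε| |h₁ λ| ≤ |ε| / |sin c|`, the residual is at most `ε² ω / |sin c|`.
-/

open Real NNReal

section AbelResidual

variable {p h₁ : ℝ → ℝ} {τ₀ ε l : ℝ}

lemma abel_residual_eq (hh₁ : h₁ l - h₁ (l - τ₀) = p l) :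
    (l + ε * h₁ l) - (τ₀ + ε * p (l + ε * h₁ l)) - ((l - τ₀) + ε * h₁ (l - τ₀)) =
      ε * (p l - p (l + ε * h₁ l)) := by
  rw [← hh₁]; ring

lemma abs_abel_residual_le {K : ℝ≥0} (hp : LipschitzWith K p)
    (hh₁ : h₁ l - h₁ (l - τ₀) = p l) :
    |(l + ε * h₁ l) - (τ₀ + ε * p (l + ε * h₁ l)) - ((l - τ₀) + ε * h₁ (l - τ₀))| ≤
      ε ^ 2 * K * |h₁ l| := by
  have hlip : |p l - p (l + ε * h₁ l)| ≤ K * (|ε| * |h₁ l|) := by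
    simpa [Real.dist_eq, abs_mul] using hp.dist_le_mul l (l + ε * h₁ l)
  calc _ = |ε| * |p l - p (l + ε * h₁ l)| := by rw [abel_residual_eq hh₁, abs_mul]
    _ ≤ |ε| * (K * (|ε| * |h₁ l|)) := by gcongr
    _ = ε ^ 2 * K * |h₁ l| := by rw [← sq_abs ε]; ring

end AbelResidual

lemma lipschitzWith_sin_mul (ω : ℝ) : LipschitzWith ‖ω‖₊ fun t ↦ sin (ω * t) := by
  refine LipschitzWith.of_dist_le_mul fun x y ↦ ?_
  rw [Real.dist_eq, Real.dist_eq, coe_nnnorm, norm_eq_abs, ← abs_mul, mul_sub]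
  exact abs_sin_sub_sin_le _ _

namespace SinusoidalDelay

noncomputable def correction (ω τ₀ l : ℝ) : ℝ :=
  (cos (ω * τ₀ / 2) - cos (ω * l + ω * τ₀ / 2)) / (2 * sin (ω * τ₀ / 2))

variable {ω τ₀ : ℝ}

@[simp] lemma correction_zero : correction ω τ₀ 0 = 0 := by
  simp [correction]

lemma correction_sub_correction_sub (hs : sin (ω * τ₀ / 2) ≠ 0) (l : ℝ) :
    correction ω τ₀ l - correction ω τ₀ (l - τ₀) = sin (ω * l) := by
  have hshift : ω * (l - τ₀) + ω * τ₀ / 2 = ω * l - ω * τ₀ / 2 := by ring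
  have hsum_to_product : cos (ω * l - ω * τ₀ / 2) - cos (ω * l + ω * τ₀ / 2) =
      2 * sin (ω * l) * sin (ω * τ₀ / 2) := by
    rw [cos_sub, cos_add]; ring
  rw [correction, correction, hshift, div_sub_div_same, div_eq_iff (mul_ne_zero two_ne_zero hs)]
  linarith

lemma abs_correction_le (l : ℝ) : |correction ω τ₀ l| ≤ 1 / |sin (ω * τ₀ / 2)| := by
  have hnum : |cos (ω * τ₀ / 2) - cos (ω * l + ω * τ₀ / 2)| ≤ 2 :=
    (abs_sub _ _).trans <| by
      linarith [abs_cos_le_one (ω * τ₀ / 2), abs_cos_le_one (ω * l + ω * τ₀ / 2)]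
  rw [correction, abs_div, abs_mul, abs_two]
  calc _ ≤ 2 / (2 * |sin (ω * τ₀ / 2)|) := by gcongr
    _ = 1 / |sin (ω * τ₀ / 2)| := by rw [div_mul_eq_div_div, div_self two_ne_zero]

end SinusoidalDelay

theorem sinusoidal_first_order_residual_bound_general
    (ω τ₀ : ℝ) (hω : 0 < ω)
    (hs : Real.sin (ω * τ₀ / 2) ≠ 0)
    (ε : ℝ)
    (τ : ℝ → ℝ) (hτ : ∀ t : ℝ, τ t = τ₀ + ε * Real.sin (ω * t))
    (h₁ : ℝ → ℝ)
    (hh₁ : ∀ l : ℝ, h₁ l =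
      (Real.cos (ω * τ₀ / 2) - Real.cos (ω * l + ω * τ₀ / 2)) / (2 * Real.sin (ω * τ₀ / 2)))
    (he : ℝ → ℝ) (hhe : ∀ l : ℝ, he l = l + ε * h₁ l) :
    he 0 = 0 ∧
      ∀ l : ℝ, |he l - τ (he l) - he (l - τ₀)| ≤ ε ^ 2 * ω / |Real.sin (ω * τ₀ / 2)| := by
  obtain rfl : h₁ = SinusoidalDelay.correction ω τ₀ := funext hh₁
  refine ⟨by simp [hhe], fun l ↦ ?_⟩
  have hresidual := abs_abel_residual_le (ε := ε) (lipschitzWith_sin_mul ω)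
    (SinusoidalDelay.correction_sub_correction_sub hs l)
  rw [coe_nnnorm, norm_of_nonneg hω.le] at hresidual
  rw [hhe, hhe, hτ]
  calc _ ≤ ε ^ 2 * ω * |SinusoidalDelay.correction ω τ₀ l| := hresidual
    _ ≤ ε ^ 2 * ω * (1 / |sin (ω * τ₀ / 2)|) := by
      gcongr; exact SinusoidalDelay.abs_correction_le l
    _ = ε ^ 2 * ω / |sin (ω * τ₀ / 2)| := by rw [mul_one_div]

/-- For the sinusoidal delay τ(t) = τ₀ + ε sin(ωt) and the
first-order approximate time-transformation h_ε(λ) = λ + ε h₁(λ), where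
h₁(λ) = (cos(ωτ₀/2) − cos(ωλ + ωτ₀/2))/(2 sin(ωτ₀/2)), one has h_ε(0) = 0 and
the Abel-equation residual satisfies
|h_ε(λ) − τ(h_ε(λ)) − h_ε(λ − τ₀)| ≤ ε²ω/|sin(ωτ₀/2)| for every λ ∈ ℝ. -/
theorem sinusoidal_first_order_residual_bound
    (ω τ₀ : ℝ) (hω : 0 < ω) (hτ₀ : 0 < τ₀)
    (hs : Real.sin (ω * τ₀ / 2) ≠ 0)
    (ε : ℝ) (hε : 0 ≤ ε)
    (τ : ℝ → ℝ) (hτ : ∀ t : ℝ, τ t = τ₀ + ε * Real.sin (ω * t))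
    (h₁ : ℝ → ℝ)
    (hh₁ : ∀ l : ℝ, h₁ l =
      (Real.cos (ω * τ₀ / 2) - Real.cos (ω * l + ω * τ₀ / 2)) / (2 * Real.sin (ω * τ₀ / 2)))
    (he : ℝ → ℝ) (hhe : ∀ l : ℝ, he l = l + ε * h₁ l) :
    he 0 = 0 ∧
      ∀ l : ℝ, |he l - τ (he l) - he (l - τ₀)| ≤ ε ^ 2 * ω / |Real.sin (ω * τ₀ / 2)| :=
  sinusoidal_first_order_residual_bound_general ω τ₀ hω hs ε τ hτ h₁ hh₁ he hhe
end

section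
/- Let ω, τ₀ ∈ ℝ with sin(ωτ₀/2) ≠ 0 and sin(ωτ₀) ≠ 0. Define h₁(λ) := (cos(ωτ₀/2) − cos(ωλ + ωτ₀/2)) / (2 sin(ωτ₀/2)) and h₂(λ) := −(ω cot(ωτ₀/2)/(4τ₀)) λ + ω (sin(3ωτ₀/2) − sin(2ωλ + 3ωτ₀/2)) / (8 sin(ωτ₀/2) sin(ωτ₀)) + ω cot(ωτ₀/2) (sin(ωλ + ωτ₀/2) − sin(ωτ₀/2)) / (4 sin(ωτ₀/2)). Then h₂(0) = 0 and h₂(λ) − h₂(λ − τ₀) = ω cos(ωλ) h₁(λ) for every λ ∈ ℝ. -/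
/-!
Write `a = ωτ₀/2` and `x = ωλ`. Shifting `λ` by `τ₀` shifts the oscillating arguments of `h₂` by
`2a` and `4a`, so by `sin (y + b) - sin (y - b) = 2 sin b cos y` the difference `h₂(λ) - h₂(λ - τ₀)`
collapses to `ω (2 cos a cos x - cos a - cos (2x + a)) / (4 sin a)`, the linear term contributing
the constant `-ω cos a / (4 sin a)`. Product-to-sum, `2 cos x cos (x + a) = cos a + cos (2x + a)`,
turns `ω cos x · h₁(λ)` into the same expression.
-/

open Real

theorem Real.sin_add_sub_sin_sub (x y : ℝ) : sin (x + y) - sin (x - y) = 2 * sin y * cos x := by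
  rw [sin_sub_sin]
  ring_nf

/-- The closed-form second-order correction h₂ for the sinusoidal
delay (with τ* = τ₀) satisfies h₂(0) = 0 and the second-order functional
equation h₂(λ) − h₂(λ − τ₀) = ω cos(ωλ) h₁(λ) for all λ ∈ ℝ, where
cot(x) = cos(x)/sin(x). -/
theorem sinusoidal_second_order_functional_equation
    (ω τ₀ : ℝ) (hs1 : Real.sin (ω * τ₀ / 2) ≠ 0) (hs2 : Real.sin (ω * τ₀) ≠ 0)
    (h₁ h₂ : ℝ → ℝ)
    (hh₁ : ∀ l : ℝ, h₁ l =
      (Real.cos (ω * τ₀ / 2) - Real.cos (ω * l + ω * τ₀ / 2)) / (2 * Real.sin (ω * τ₀ / 2)))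
    (hh₂ : ∀ l : ℝ, h₂ l =
      -(ω * (Real.cos (ω * τ₀ / 2) / Real.sin (ω * τ₀ / 2)) / (4 * τ₀)) * l
      + ω * (Real.sin (3 * ω * τ₀ / 2) - Real.sin (2 * ω * l + 3 * ω * τ₀ / 2)) /
          (8 * Real.sin (ω * τ₀ / 2) * Real.sin (ω * τ₀))
      + ω * (Real.cos (ω * τ₀ / 2) / Real.sin (ω * τ₀ / 2)) *
          (Real.sin (ω * l + ω * τ₀ / 2) - Real.sin (ω * τ₀ / 2)) /
          (4 * Real.sin (ω * τ₀ / 2))) :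
    h₂ 0 = 0 ∧ ∀ l : ℝ, h₂ l - h₂ (l - τ₀) = ω * Real.cos (ω * l) * h₁ l := by
  refine ⟨by simp [hh₂], fun l => ?_⟩
  have hτ₀ : τ₀ ≠ 0 := fun h => hs2 (by simp [h])
  have hdiff : h₂ l - h₂ (l - τ₀) =
      -(ω * cos (ω * τ₀ / 2) / (4 * sin (ω * τ₀ / 2)))
      + ω * (sin (2 * ω * (l - τ₀) + 3 * ω * τ₀ / 2) - sin (2 * ω * l + 3 * ω * τ₀ / 2)) /
          (8 * sin (ω * τ₀ / 2) * sin (ω * τ₀))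
      + ω * cos (ω * τ₀ / 2) * (sin (ω * l + ω * τ₀ / 2) - sin (ω * (l - τ₀) + ω * τ₀ / 2)) /
          (4 * sin (ω * τ₀ / 2) ^ 2) := by
    rw [hh₂, hh₂]
    field_simp
    ring
  have hquadratic : sin (2 * ω * (l - τ₀) + 3 * ω * τ₀ / 2) - sin (2 * ω * l + 3 * ω * τ₀ / 2) =
      -(2 * sin (ω * τ₀) * cos (2 * ω * l + ω * τ₀ / 2)) := by
    rw [← sin_add_sub_sin_sub]
    ring_nf
  have hlinear : sin (ω * l + ω * τ₀ / 2) - sin (ω * (l - τ₀) + ω * τ₀ / 2) =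
      2 * sin (ω * τ₀ / 2) * cos (ω * l) := by
    rw [← sin_add_sub_sin_sub]
    ring_nf
  have hproduct : cos (2 * ω * l + ω * τ₀ / 2) =
      2 * cos (ω * l) * cos (ω * l + ω * τ₀ / 2) - cos (ω * τ₀ / 2) := by
    rw [two_mul_cos_mul_cos, sub_add_cancel_left, cos_neg]
    ring_nf
  rw [hdiff, hquadratic, hlinear, hproduct, hh₁]
  field_simp
  ring
end
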